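/- arXiv:1606.07760 — 3 statements merged into one kernel-verified Lean document; each statement's English description precedes it below -/
import Mathlib

section
/- Let G ∈ F_{q^m}^{k×n} be a generator matrix whose k×(n−w) right block G′ (in suitable coordinates G·P = (L | R) with R = G′) generates a Gabidulin code of length n−w and dimension k ≤ n−w, and suppose K = x·G + z with z = (s|0)·P^{-1}. If T ∈ GL_n(F_q) and z* ∈ L^w satisfy z·T = (z* | 0), then x ∈ L^k is the unique solution of the linear system given by the last n−w coordinates of the equation K·T = X·G·T + (z*|0); in particular, knowing such a T allows full recovery of the private key (x, z). -/
open Polynomial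

open Polynomial

lemma moore_key (Fq F : Type) [Field Fq] [Fintype Fq] [Field F] [Fintype F]
    [Algebra Fq F] (q : ℕ) (hq : q = Fintype.card Fq) {k N : ℕ} (hkN : k ≤ N)
    (h : Fin N → F) (hind : LinearIndependent Fq h) (y : Fin k → F)
    (hy : ∀ j, ∑ i, y i * h j ^ q ^ (i : ℕ) = 0) : y = 0 := by
  classical
  rcases Nat.eq_zero_or_pos k with rfl | hk
  · ext i; exact absurd i.2 (by omega)
  have hq2 : 1 < q := hq ▸ Fintype.one_lt_card
  -- characteristic
  set p := ringChar Fq with hpdef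
  haveI : CharP Fq p := ringChar.charP Fq
  have hp : p.Prime := CharP.char_is_prime Fq p
  haveI : Fact p.Prime := ⟨hp⟩
  obtain ⟨d, hcard⟩ := FiniteField.card Fq p
  haveI : CharP F p := charP_of_injective_algebraMap (algebraMap Fq F).injective p
  haveI : ExpChar F p := ExpChar.prime hp
  set f : F[X] := ∑ i : Fin k, C (y i) * X ^ q ^ (i : ℕ) with hf
  have evalform : ∀ v : F, f.eval v = ∑ i : Fin k, y i * v ^ q ^ (i : ℕ) := by
    intro v; simp [hf, eval_finset_sum]
  have heval : ∀ v : F, v ∈ Submodule.span Fq (Set.range h) → f.eval v = 0 := by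
    intro v hv
    induction hv using Submodule.span_induction with
    | mem v hv => obtain ⟨j, rfl⟩ := hv; rw [evalform]; exact hy j
    | zero =>
        rw [evalform]
        simp [zero_pow (pow_pos (by omega : 0 < q) _).ne']
    | add u v _ _ hu hv =>
        rw [evalform] at hu hv ⊢
        have hfrob : ∀ (a b : F) (i : Fin k),
            (a + b) ^ q ^ (i : ℕ) = a ^ q ^ (i : ℕ) + b ^ q ^ (i : ℕ) := by
          intro a b i
          rw [hq, hcard.2, ← pow_mul, add_pow_char_pow]
        simp only [hfrob, mul_add]
        rw [Finset.sum_add_distrib, hu, hv, add_zero]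
    | smul a v _ hv =>
        rw [evalform] at hv ⊢
        have hpow : ∀ i : Fin k, (a • v) ^ q ^ (i : ℕ) = a • (v ^ q ^ (i : ℕ)) := by
          intro i
          rw [Algebra.smul_def, Algebra.smul_def, mul_pow, ← map_pow]
          congr 2
          rw [hq]; exact FiniteField.pow_card_pow _ _
        simp only [hpow, mul_smul_comm]
        rw [← Finset.smul_sum, hv, smul_zero]
  set W := Submodule.span Fq (Set.range h) with hW
  haveI : Fintype W := Fintype.ofFinite _
  have hWcard : Fintype.card W = q ^ N := by
    rw [Module.card_eq_pow_finrank (K := Fq) (V := W), ← hq]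
    congr 1
    rw [hW, finrank_span_eq_card hind, Fintype.card_fin]
  have hdeg : f.natDegree ≤ q ^ (k - 1) := by
    refine (Polynomial.natDegree_sum_le _ _).trans ?_
    rw [Finset.fold_max_le]
    refine ⟨Nat.zero_le _, fun i _ => ?_⟩
    exact (Polynomial.natDegree_C_mul_X_pow_le _ _).trans
      (Nat.pow_le_pow_right (by omega) (by omega))
  have hf0 : f = 0 := by
    apply Polynomial.eq_zero_of_natDegree_lt_card_of_eval_eq_zero f
      (Subtype.val_injective (p := fun v => v ∈ W))
      (fun v => heval v.1 v.2)
    rw [hWcard]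
    exact lt_of_le_of_lt hdeg (Nat.pow_lt_pow_right hq2 (by omega))
  ext i
  have : f.coeff (q ^ (i : ℕ)) = y i := by
    rw [hf, Polynomial.finset_sum_coeff]
    rw [Finset.sum_eq_single i]
    · simp
    · intro j _ hji
      rw [Polynomial.coeff_C_mul, Polynomial.coeff_X_pow, if_neg, mul_zero]
      exact fun hc => hji (Fin.ext (Nat.pow_right_injective hq2 hc.symm))
    · simp
  rw [hf0] at this
  simpa using this.symm

lemma indep_vecMul {Fq F : Type} [Field Fq] [Field F] [Algebra Fq F] {n : ℕ}
    (g' : Fin n → F) (hg : LinearIndependent Fq g')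
    (T : Matrix (Fin n) (Fin n) Fq) (hT : IsUnit T) :
    LinearIndependent Fq (fun j : Fin n => ∑ l, g' l * algebraMap Fq F (T l j)) := by
  rw [Fintype.linearIndependent_iff]
  intro c hc
  have hterm : ∀ l i, (T l i * c i) • g' l = c i • (g' l * algebraMap Fq F (T l i)) := by
    intro l i
    rw [Algebra.smul_def, Algebra.smul_def, map_mul]; ring
  have key : ∑ l, (T.mulVec c l) • g' l = 0 := by
    calc ∑ l, T.mulVec c l • g' l
        = ∑ l, ∑ i, c i • (g' l * algebraMap Fq F (T l i)) := by
          refine Finset.sum_congr rfl fun l _ => ?_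
          rw [Matrix.mulVec, dotProduct, Finset.sum_smul]
          exact Finset.sum_congr rfl fun i _ => hterm l i
      _ = ∑ i, c i • ∑ l, g' l * algebraMap Fq F (T l i) := by
          rw [Finset.sum_comm]
          exact Finset.sum_congr rfl fun i _ => (Finset.smul_sum).symm
      _ = 0 := hc
  have hTc : T.mulVec c = 0 := by
    have := Fintype.linearIndependent_iff.mp hg (T.mulVec c) key
    ext l; exact this l
  intro i
  have hinj := Matrix.mulVec_injective_iff_isUnit.mpr hT
  have : c = 0 := by
    have := hinj (a₁ := c) (a₂ := 0) (by rw [hTc, Matrix.mulVec_zero])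
    exact this
  rw [this]; rfl



/-- The rank weight of `x ∈ F^n` over the subfield `Fq`. -/
noncomputable def rankWeight (Fq : Type) [Field Fq] {F : Type} [Field F]
    [Algebra Fq F] {n : ℕ} (x : Fin n → F) : ℕ :=
  Module.finrank Fq (Submodule.span Fq (Set.range x))

/-- Faure–Loidreau setting: `G` is the Moore generator matrix of a
Gabidulin code `Gab_k(g)` whose length-`(n−w)` restrictions have dimension `k ≤ n − w`,
`K = x·G + z` with `z = (s|0)·P⁻¹`. If `T ∈ GL_n(F_q)` and `z* ∈ L^w` with
`‖z*‖_q = w` satisfy `z·T = (z* | 0)`, then `x` is the unique solution of the linear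
system given by the last `n − w` coordinates of `K·T = X·G·T + (z*|0)`; in particular
such a `T` yields full recovery of the private key `(x, z)`. -/
theorem stmt12 (Fq Fqm L : Type) [Field Fq] [Fintype Fq] [Field Fqm] [Fintype Fqm]
    [Field L] [Fintype L] [Algebra Fq Fqm] [Algebra Fqm L] [Algebra Fq L]
    [IsScalarTower Fq Fqm L]
    (q : ℕ) (hq : q = Fintype.card Fq)
    (n k w : ℕ) (hkw : k + w ≤ n)
    (g : Fin n → Fqm) (hg : rankWeight Fq g = n)
    (G : Matrix (Fin k) (Fin n) Fqm)
    (hG : G = Matrix.of fun (i : Fin k) (j : Fin n) => g j ^ q ^ (i : ℕ))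
    (x : Fin k → L) (s : Fin w → L) (hs : rankWeight Fq s = w)
    (P : Matrix (Fin n) (Fin n) Fq) (hP : IsUnit P)
    (z : Fin n → L)
    (hz : z = Matrix.vecMul (fun j : Fin n => if h : (j : ℕ) < w then s ⟨j, h⟩ else 0)
      ((P⁻¹).map (algebraMap Fq L)))
    (K : Fin n → L) (hK : K = Matrix.vecMul x (G.map (algebraMap Fqm L)) + z)
    (T : Matrix (Fin n) (Fin n) Fq) (hT : IsUnit T)
    (zs : Fin w → L) (hzs : rankWeight Fq zs = w)
    (hzT : Matrix.vecMul z (T.map (algebraMap Fq L)) =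
      fun j : Fin n => if h : (j : ℕ) < w then zs ⟨j, h⟩ else 0) :
    ∀ X : Fin k → L,
      (∀ j : Fin n, w ≤ (j : ℕ) →
          Matrix.vecMul K (T.map (algebraMap Fq L)) j =
            Matrix.vecMul X (G.map (algebraMap Fqm L) * T.map (algebraMap Fq L)) j) ↔
        X = x := by
  classical
  set Tm := T.map (algebraMap Fq L) with hTm
  set Gm := G.map (algebraMap Fqm L) with hGm
  -- characteristic setup
  set p := ringChar Fq with hpdef
  haveI : CharP Fq p := ringChar.charP Fq
  have hp : p.Prime := CharP.char_is_prime Fq p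
  haveI : Fact p.Prime := ⟨hp⟩
  obtain ⟨d, hcard⟩ := FiniteField.card Fq p
  haveI : CharP L p := charP_of_injective_algebraMap (algebraMap Fq L).injective p
  haveI : ExpChar L p := ExpChar.prime hp
  -- g is linearly independent, also after mapping into L
  have hgind : LinearIndependent Fq g := by
    rw [linearIndependent_iff_card_eq_finrank_span, Fintype.card_fin]
    exact hg.symm
  set gL : Fin n → L := fun l => algebraMap Fqm L (g l) with hgL
  have hgLind : LinearIndependent Fq gL := by
    have := hgind.map' (f := (IsScalarTower.toAlgHom Fq Fqm L).toLinearMap)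
      (by rw [LinearMap.ker_eq_bot]; exact (algebraMap Fqm L).injective)
    exact this
  set hfam : Fin n → L := fun j : Fin n => ∑ l, gL l * algebraMap Fq L (T l j) with hhfam
  have hfamind : LinearIndependent Fq hfam := indep_vecMul gL hgLind T hT
  -- the key entry computation: (G·T) is the Moore matrix of hfam
  have hentry : ∀ (i : Fin k) (j : Fin n), (Gm * Tm) i j = hfam j ^ q ^ (i : ℕ) := by
    intro i j
    have h1 : (Gm * Tm) i j = ∑ l, (gL l * algebraMap Fq L (T l j)) ^ q ^ (i : ℕ) := by
      rw [Matrix.mul_apply]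
      refine Finset.sum_congr rfl fun l _ => ?_
      rw [hTm, hGm, Matrix.map_apply, Matrix.map_apply, hG]
      simp only [Matrix.of_apply]
      rw [mul_pow, map_pow]
      congr 1
      rw [← map_pow]
      congr 1
      rw [hq]
      exact (FiniteField.pow_card_pow _ _).symm
    have hqi : q ^ (i : ℕ) = p ^ ((d : ℕ) * (i : ℕ)) := by
      rw [hq, hcard.2, ← pow_mul]
    have h2 := map_sum (iterateFrobenius L p ((d : ℕ) * (i : ℕ)))
      (fun l => gL l * algebraMap Fq L (T l j)) Finset.univ
    simp only [iterateFrobenius_def] at h2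
    rw [h1, hqi, ← h2]
  -- z·T vanishes on the last n - w coordinates
  have hzero : ∀ j : Fin n, w ≤ (j : ℕ) → Matrix.vecMul z Tm j = 0 := by
    intro j hj
    have := congrFun hzT j
    rw [hTm] at this ⊢
    rw [this, dif_neg (by omega)]
  intro X
  constructor
  · intro hyp
    have hx_eq : ∀ j : Fin n, w ≤ (j : ℕ) →
        Matrix.vecMul K Tm j = Matrix.vecMul x (Gm * Tm) j := by
      intro j hj
      rw [hK, Matrix.add_vecMul, Pi.add_apply, hzero j hj, add_zero,
        Matrix.vecMul_vecMul]
    have hdiff : ∀ j : Fin n, w ≤ (j : ℕ) →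
        ∑ i, (X i - x i) * hfam j ^ q ^ (i : ℕ) = 0 := by
      intro j hj
      have h3 : Matrix.vecMul X (Gm * Tm) j = Matrix.vecMul x (Gm * Tm) j :=
        (hyp j hj).symm.trans (hx_eq j hj)
      rw [Matrix.vecMul, Matrix.vecMul, dotProduct, dotProduct] at h3
      have h4 : ∑ i, (X i - x i) * (Gm * Tm) i j = 0 := by
        simp only [sub_mul]
        rw [Finset.sum_sub_distrib, h3, sub_self]
      simpa only [hentry] using h4
    set e : Fin (n - w) → Fin n := fun j => ⟨w + (j : ℕ), by omega⟩ with he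
    have heinj : Function.Injective e := by
      intro a b hab
      have : w + (a : ℕ) = w + (b : ℕ) := congrArg Fin.val hab
      exact Fin.ext (by omega)
    have hindcomp : LinearIndependent Fq (hfam ∘ e) := hfamind.comp e heinj
    have hzero2 := moore_key Fq L q hq (show k ≤ n - w by omega) (hfam ∘ e) hindcomp
      (fun i => X i - x i) (fun j' => hdiff (e j') (by simp [he]))
    funext i
    have := congrFun hzero2 i
    simpa [sub_eq_zero] using this
  · rintro rfl
    intro j hj
    rw [hK, Matrix.add_vecMul, Pi.add_apply, hzero j hj, add_zero,
      Matrix.vecMul_vecMul]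
end

section
/- In the Faure–Loidreau setting, C_pub·P = Gab_k(g·P) + B, where C_pub = Gab_k(g) + Σ_{i=1}^u F_{q^m}·Tr_{L/F_{q^m}}(γ_i K), K = xG + z, z = (s|0)P^{-1}, and B = Σ_{i=1}^u F_{q^m}·(Tr_{L/F_{q^m}}(γ_i s) | 0). -/
/-- The Gabidulin code `Gab_k(g) ⊆ F_{q^m}^n`. -/
noncomputable def gab {Fqm : Type} [Field Fqm] (q k : ℕ) {n : ℕ} (g : Fin n → Fqm) :
    Submodule Fqm (Fin n → Fqm) :=
  Submodule.span Fqm (Set.range fun i : Fin k => fun j : Fin n => g j ^ q ^ (i : ℕ))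

private lemma aux_sup {R M : Type*} [CommRing R] [AddCommGroup M] [Module R M]
    (A : Submodule R M) {ι : Type*} (b c : ι → M) (hc : ∀ i, c i ∈ A) :
    A ⊔ Submodule.span R (Set.range fun i => c i + b i) = A ⊔ Submodule.span R (Set.range b) := by
  apply le_antisymm
  · refine sup_le le_sup_left (Submodule.span_le.mpr ?_)
    rintro _ ⟨i, rfl⟩
    exact add_mem (Submodule.mem_sup_left (hc i))
      (Submodule.mem_sup_right (Submodule.subset_span ⟨i, rfl⟩))
  · refine sup_le le_sup_left (Submodule.span_le.mpr ?_)
    rintro _ ⟨i, rfl⟩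
    rw [show b i = (c i + b i) - c i from (add_sub_cancel_left (c i) (b i)).symm]
    exact sub_mem (Submodule.mem_sup_right (Submodule.subset_span ⟨i, rfl⟩))
      (Submodule.mem_sup_left (hc i))

/-- Faure–Loidreau setting: `C_pub·P = Gab_k(g·P) + B`, where
`C_pub = Gab_k(g) + ∑ᵢ F_{q^m}·Tr_{L/F_{q^m}}(γ_i K)`, `K = xG + z`, `z = (s|0)P⁻¹`,
and `B = ∑ᵢ F_{q^m}·(Tr_{L/F_{q^m}}(γ_i s) | 0)`. -/
theorem stmt16 (Fq Fqm L : Type) [Field Fq] [Fintype Fq] [Field Fqm] [Fintype Fqm]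
    [Field L] [Fintype L] [Algebra Fq Fqm] [Algebra Fqm L] [Algebra Fq L]
    [IsScalarTower Fq Fqm L]
    (q : ℕ) (hq : q = Fintype.card Fq)
    (n k w u : ℕ) (hn : k + w ≤ n) (hu : Module.finrank Fqm L = u) (hu1 : 1 < u)
    (γ : Module.Basis (Fin u) Fqm L)
    (g : Fin n → Fqm) (hg : rankWeight Fq g = n)
    (G : Matrix (Fin k) (Fin n) Fqm)
    (hG : G = Matrix.of fun (i : Fin k) (j : Fin n) => g j ^ q ^ (i : ℕ))
    (x : Fin k → L) (s : Fin w → L) (hs : rankWeight Fq s = w)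
    (P : Matrix (Fin n) (Fin n) Fq) (hP : IsUnit P)
    (z : Fin n → L)
    (hz : z = Matrix.vecMul (fun j : Fin n => if h : (j : ℕ) < w then s ⟨j, h⟩ else 0)
      ((P⁻¹).map (algebraMap Fq L)))
    (K : Fin n → L) (hK : K = Matrix.vecMul x (G.map (algebraMap Fqm L)) + z)
    (Cpub : Submodule Fqm (Fin n → Fqm))
    (hC : Cpub = gab q k g ⊔ Submodule.span Fqm
      (Set.range fun i : Fin u => fun j : Fin n => Algebra.trace Fqm L (γ i * K j)))
    (B : Submodule Fqm (Fin n → Fqm))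
    (hB : B = Submodule.span Fqm
      (Set.range fun i : Fin u => fun j : Fin n =>
        if h : (j : ℕ) < w then Algebra.trace Fqm L (γ i * s ⟨j, h⟩) else 0)) :
    Submodule.map (Matrix.vecMulLinear (P.map (algebraMap Fq Fqm))) Cpub =
      gab q k (Matrix.vecMul g (P.map (algebraMap Fq Fqm))) ⊔ B := by
  -- characteristic setup
  have hp : (ringChar Fq).Prime := CharP.char_is_prime Fq (ringChar Fq)
  haveI : CharP Fqm (ringChar Fq) :=
    charP_of_injective_algebraMap (algebraMap Fq Fqm).injective (ringChar Fq)
  haveI : ExpChar Fqm (ringChar Fq) := ExpChar.prime hp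
  obtain ⟨a, -, hcard⟩ := FiniteField.card Fq (ringChar Fq)
  set M : Matrix (Fin n) (Fin n) Fqm := P.map (algebraMap Fq Fqm) with hM
  have hsum : ∀ (e : ℕ) {ι : Type} [Fintype ι] (v : ι → Fqm),
      (∑ l, v l) ^ q ^ e = ∑ l, v l ^ q ^ e := by
    intro e ι _ v
    rw [hq, hcard, ← pow_mul]
    exact sum_pow_char_pow (ringChar Fq) (a * e) Finset.univ v
  have hfix : ∀ (e : ℕ) (t : Fq), (algebraMap Fq Fqm t) ^ q ^ e = algebraMap Fq Fqm t := by
    intro e t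
    rw [← map_pow, hq, FiniteField.pow_card_pow]
  have hvm : ∀ {m' : ℕ} {α : Type} [CommRing α] (v : Fin m' → α)
      (N : Matrix (Fin m') (Fin n) α) (j : Fin n),
      Matrix.vecMul v N j = ∑ l, v l * N l j := by
    intro m' α _ v N j; simp [Matrix.vecMul, dotProduct]
  -- Claim A : the Gabidulin part
  have hA : Submodule.map (Matrix.vecMulLinear M) (gab q k g)
      = gab q k (Matrix.vecMul g M) := by
    unfold gab
    rw [Submodule.map_span, ← Set.range_comp]
    have h0 : (⇑(Matrix.vecMulLinear M) ∘ fun i : Fin k => fun j => g j ^ q ^ (i : ℕ))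
        = fun i : Fin k => fun j => Matrix.vecMul g M j ^ q ^ (i : ℕ) := by
      funext e j
      show Matrix.vecMul (fun j => g j ^ q ^ (e : ℕ)) M j = Matrix.vecMul g M j ^ q ^ (e : ℕ)
      rw [hvm, hvm, hsum ((e : ℕ))]
      refine Finset.sum_congr rfl fun l _ => ?_
      simp only [hM, Matrix.map_apply, mul_pow, hfix (e : ℕ)]
    rw [h0]
  -- matrix map facts
  have hmapP : P.map (algebraMap Fq L) = M.map (algebraMap Fqm L) := by
    ext l j
    simp only [Matrix.map_apply]
    exact IsScalarTower.algebraMap_apply Fq Fqm L (P l j)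
  have hdet : IsUnit P.det := (Matrix.isUnit_iff_isUnit_det P).mp hP
  have hPinv : (P⁻¹).map (algebraMap Fq L) * P.map (algebraMap Fq L) = 1 := by
    rw [← Matrix.map_mul, Matrix.nonsing_inv_mul P hdet,
      Matrix.map_one _ (map_zero _) (map_one _)]
  have hKP : Matrix.vecMul K (P.map (algebraMap Fq L)) =
      Matrix.vecMul x ((G * M).map (algebraMap Fqm L))
        + fun j : Fin n => if h : (j : ℕ) < w then s ⟨j, h⟩ else 0 := by
    rw [hK, Matrix.add_vecMul, Matrix.vecMul_vecMul, hz, Matrix.vecMul_vecMul, hPinv,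
      Matrix.vecMul_one, hmapP, ← Matrix.map_mul]
  have hTlin : ∀ (c : Fqm) (y : L),
      Algebra.trace Fqm L (algebraMap Fqm L c * y) = c * Algebra.trace Fqm L y := by
    intro c y
    rw [← Algebra.smul_def, map_smul, smul_eq_mul]
  -- generators of the trace part
  have hgen : ∀ i : Fin u,
      Matrix.vecMul (fun j => Algebra.trace Fqm L (γ i * K j)) M
        = (fun j => ∑ l, Algebra.trace Fqm L (γ i * x l) * (G * M) l j)
          + fun j : Fin n => if h : (j : ℕ) < w then Algebra.trace Fqm L (γ i * s ⟨j, h⟩) else 0 := by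
    intro i
    funext j
    rw [hvm]
    calc ∑ l, Algebra.trace Fqm L (γ i * K l) * M l j
        = Algebra.trace Fqm L (∑ l, algebraMap Fqm L (M l j) * (γ i * K l)) := by
          rw [map_sum]
          exact Finset.sum_congr rfl fun l _ => by rw [hTlin, mul_comm]
      _ = Algebra.trace Fqm L (γ i * Matrix.vecMul K (P.map (algebraMap Fq L)) j) := by
          congr 1
          rw [hvm, Finset.mul_sum]
          refine Finset.sum_congr rfl fun l _ => ?_
          have h1 : (P.map (algebraMap Fq L)) l j = algebraMap Fqm L (M l j) := by
            rw [hmapP]; rfl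
          rw [h1]; ring
      _ = Algebra.trace Fqm L (γ i * Matrix.vecMul x ((G * M).map (algebraMap Fqm L)) j)
            + Algebra.trace Fqm L
              (γ i * if h : (j : ℕ) < w then s ⟨j, h⟩ else 0) := by
          rw [hKP]
          simp [mul_add]
      _ = (∑ l, Algebra.trace Fqm L (γ i * x l) * (G * M) l j)
            + if h : (j : ℕ) < w then Algebra.trace Fqm L (γ i * s ⟨j, h⟩) else 0 := by
          congr 1
          · rw [hvm, Finset.mul_sum, map_sum]
            refine Finset.sum_congr rfl fun l _ => ?_
            rw [show γ i * (x l * ((G * M).map (algebraMap Fqm L)) l j)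
                = algebraMap Fqm L ((G * M) l j) * (γ i * x l) by
              simp only [Matrix.map_apply]; ring]
            rw [hTlin, mul_comm]
          · by_cases h : (j : ℕ) < w <;> simp [h]
  -- the Gabidulin-part of the image generators lies in `gab q k (g·P)`
  have hc : ∀ i : Fin u,
      (fun j => ∑ l, Algebra.trace Fqm L (γ i * x l) * (G * M) l j)
        ∈ gab q k (Matrix.vecMul g M) := by
    intro i
    rw [← hA]
    refine Submodule.mem_map.mpr
      ⟨Matrix.vecMul (fun l => Algebra.trace Fqm L (γ i * x l)) G, ?_, ?_⟩
    · unfold gab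
      have h2 : Matrix.vecMul (fun l => Algebra.trace Fqm L (γ i * x l)) G
          = ∑ l : Fin k, Algebra.trace Fqm L (γ i * x l) • fun j => g j ^ q ^ (l : ℕ) := by
        funext j
        rw [hvm]
        simp [hG, Finset.sum_apply]
      rw [h2]
      exact Submodule.sum_mem _ fun l _ =>
        Submodule.smul_mem _ _ (Submodule.subset_span ⟨l, rfl⟩)
    · funext j
      rw [Matrix.vecMulLinear_apply, Matrix.vecMul_vecMul, hvm]
  -- put everything together
  rw [hC, Submodule.map_sup, hA, Submodule.map_span, ← Set.range_comp]
  have h3 : (⇑(Matrix.vecMulLinear M) ∘ fun i : Fin u => fun j => Algebra.trace Fqm L (γ i * K j))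
      = fun i : Fin u =>
        (fun j => ∑ l, Algebra.trace Fqm L (γ i * x l) * (G * M) l j)
          + fun j : Fin n => if h : (j : ℕ) < w then Algebra.trace Fqm L (γ i * s ⟨j, h⟩) else 0 := by
    funext i
    rw [Function.comp_apply, Matrix.vecMulLinear_apply]
    exact hgen i
  rw [h3, hB]
  exact aux_sup _ _ _ hc
end

section
/- Let g ∈ F_{q^m}^n with ||g||_q = n and n ≤ m. The dual of Gab_k(g) is the Gabidulin code Gab_{n−k}(h^{q^{−(n−k−1)}}) where h is any full-rank-weight vector in the dual of Gab_{n−1}(g); in particular, the dual of a Gabidulin code is again a Gabidulin code. -/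
/-- The dual code of `C` w.r.t. the standard bilinear form `⟨c, z⟩ = ∑ c_i z_i`. -/
noncomputable def dualCode {F : Type} [Field F] {n : ℕ} (C : Submodule F (Fin n → F)) :
    Submodule F (Fin n → F) :=
  ⨅ c ∈ C, LinearMap.ker (∑ i : Fin n, c i • (LinearMap.proj i : (Fin n → F) →ₗ[F] F))

open Polynomial Module

lemma mem_dualCode {F : Type} [Field F] {n : ℕ} (C : Submodule F (Fin n → F))
    (z : Fin n → F) : z ∈ dualCode C ↔ ∀ c ∈ C, ∑ i, c i * z i = 0 := by
  simp [dualCode, LinearMap.sum_apply, smul_eq_mul]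

lemma mem_dualCode_span {F : Type} [Field F] {n : ℕ} (S : Set (Fin n → F)) (z : Fin n → F)
    (hz : ∀ c ∈ S, ∑ i, c i * z i = 0) : z ∈ dualCode (Submodule.span F S) := by
  rw [mem_dualCode]
  intro c hc
  induction hc using Submodule.span_induction with
  | mem c hc => exact hz c hc
  | zero => simp
  | add a b _ _ ha hb => simp [add_mul, Finset.sum_add_distrib, ha, hb]
  | smul a c _ hc =>
      simp only [Pi.smul_apply, smul_eq_mul, mul_assoc, ← Finset.mul_sum, hc, mul_zero]

/-- The standard dot-product bilinear form. -/
noncomputable def dotForm (F : Type) [Field F] (n : ℕ) :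
    LinearMap.BilinForm F (Fin n → F) :=
  LinearMap.mk₂ F (fun x y => ∑ i, x i * y i)
    (by intro x x' y; simp [add_mul, Finset.sum_add_distrib])
    (by intro a x y; simp [Finset.mul_sum, mul_assoc])
    (by intro x y y'; simp [mul_add, Finset.sum_add_distrib])
    (by intro a x y; simp [Finset.mul_sum]; ring_nf; simp [mul_comm, mul_left_comm])

lemma dualCode_eq_orthogonal {F : Type} [Field F] {n : ℕ} (C : Submodule F (Fin n → F)) :
    dualCode C = (dotForm F n).orthogonal C := by
  ext z
  rw [mem_dualCode]
  constructor
  · intro hz c hc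
    simpa [dotForm, LinearMap.BilinForm.IsOrtho] using hz c hc
  · intro hz c hc
    simpa [dotForm, LinearMap.BilinForm.IsOrtho] using hz c hc

lemma finrank_dualCode {F : Type} [Field F] {n : ℕ} (C : Submodule F (Fin n → F)) :
    finrank F (dualCode C) = n - finrank F C := by
  have hrefl : (dotForm F n).IsRefl := by
    intro x y hxy
    simpa [dotForm, mul_comm] using hxy
  have hnd : (dotForm F n).Nondegenerate := by
    refine (LinearMap.IsRefl.nondegenerate_iff_separatingLeft hrefl).mpr ?_
    intro x hx
    funext j
    have := hx (Pi.single j 1)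
    simpa [dotForm, Pi.single_apply, mul_ite, Finset.sum_ite_eq'] using this
  rw [dualCode_eq_orthogonal, LinearMap.BilinForm.finrank_orthogonal hnd,
    Module.finrank_pi, Fintype.card_fin]

section Moore

variable {Fq Fqm : Type} [Field Fq] [Fintype Fq] [Field Fqm] [Fintype Fqm] [Algebra Fq Fqm]

lemma algebraMap_pow_q_pow (q : ℕ) (hq : q = Fintype.card Fq) (a : Fq) (e : ℕ) :
    algebraMap Fq Fqm a ^ q ^ e = algebraMap Fq Fqm a := by
  rw [← map_pow, hq, FiniteField.pow_card_pow]

lemma sum_pow_q (q : ℕ) (hq : q = Fintype.card Fq) {ι : Type} (s : Finset ι) (f : ι → Fqm)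
    (e : ℕ) : (∑ j ∈ s, f j) ^ q ^ e = ∑ j ∈ s, f j ^ q ^ e := by
  set p := ringChar Fq with hpdef
  haveI : CharP Fq p := ringChar.charP Fq
  have hp : p.Prime := CharP.char_is_prime Fq p
  obtain ⟨r, -, hr⟩ := FiniteField.card Fq p
  haveI : CharP Fqm p := charP_of_injective_algebraMap (algebraMap Fq Fqm).injective p
  haveI : ExpChar Fqm p := ExpChar.prime hp
  have hqe : q ^ e = p ^ ((r : ℕ) * e) := by rw [hq.trans hr, pow_mul]
  rw [hqe]
  exact map_sum (iterateFrobenius Fqm p ((r : ℕ) * e)) f s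

lemma add_pow_q (q : ℕ) (hq : q = Fintype.card Fq) (a b : Fqm) (e : ℕ) :
    (a + b) ^ q ^ e = a ^ q ^ e + b ^ q ^ e := by
  set p := ringChar Fq with hpdef
  haveI : CharP Fq p := ringChar.charP Fq
  have hp : p.Prime := CharP.char_is_prime Fq p
  obtain ⟨r, -, hr⟩ := FiniteField.card Fq p
  haveI : CharP Fqm p := charP_of_injective_algebraMap (algebraMap Fq Fqm).injective p
  haveI : ExpChar Fqm p := ExpChar.prime hp
  have hqe : q ^ e = p ^ ((r : ℕ) * e) := by rw [hq.trans hr, pow_mul]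
  rw [hqe]
  exact map_add (iterateFrobenius Fqm p ((r : ℕ) * e)) a b

lemma moore_linearIndependent (q : ℕ) (hq : q = Fintype.card Fq) {n t : ℕ} (htn : t ≤ n)
    (x : Fin n → Fqm) (hx : rankWeight Fq x = n) :
    LinearIndependent Fqm (fun i : Fin t => fun j : Fin n => x j ^ q ^ (i : ℕ)) := by
  classical
  have hq2 : 2 ≤ q := by rw [hq]; exact Fintype.one_lt_card
  rw [Fintype.linearIndependent_iff]
  intro c hc i
  by_contra hci
  set P : Polynomial Fqm := ∑ i : Fin t, Polynomial.C (c i) * Polynomial.X ^ q ^ (i : ℕ)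
    with hP
  have heval : ∀ y : Fqm, P.eval y = ∑ i : Fin t, c i * y ^ q ^ (i : ℕ) := by
    intro y; simp [hP, Polynomial.eval_finset_sum]
  -- P vanishes on the span of the range of x
  set S := Submodule.span Fq (Set.range x) with hS
  have hroot : ∀ y ∈ S, P.eval y = 0 := by
    intro y hy
    induction hy using Submodule.span_induction with
    | mem y hy =>
        obtain ⟨j, rfl⟩ := hy
        rw [heval]
        have := congrFun hc j
        simpa using this
    | zero =>
        rw [heval]
        have : ∀ i : Fin t, (0 : Fqm) ^ q ^ (i : ℕ) = 0 := fun i =>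
          zero_pow (pow_ne_zero _ (by omega : q ≠ 0))
        simp [this]
    | add a b _ _ ha hb =>
        rw [heval] at ha hb ⊢
        simp only [add_pow_q q hq, mul_add, Finset.sum_add_distrib, ha, hb, add_zero]
    | smul a y _ hy =>
        rw [heval] at hy ⊢
        have hsm : ∀ i : Fin t, (a • y) ^ q ^ (i : ℕ)
            = algebraMap Fq Fqm a * y ^ q ^ (i : ℕ) := by
          intro i
          rw [Algebra.smul_def, mul_pow, algebraMap_pow_q_pow q hq]
        simp only [hsm]
        have : ∑ x : Fin t, c x * (algebraMap Fq Fqm a * y ^ q ^ (x : ℕ))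
            = algebraMap Fq Fqm a * ∑ x : Fin t, c x * y ^ q ^ (x : ℕ) := by
          rw [Finset.mul_sum]
          exact Finset.sum_congr rfl fun _ _ => by ring
        rw [this, hy, mul_zero]
  -- P is a nonzero polynomial
  have hcoeff : P.coeff (q ^ (i : ℕ)) = c i := by
    rw [hP, Polynomial.finset_sum_coeff]
    rw [Finset.sum_eq_single i]
    · simp
    · intro j _ hji
      have hne : q ^ (i : ℕ) ≠ q ^ (j : ℕ) := fun hcontra =>
        hji (Fin.ext (Nat.pow_right_injective hq2 hcontra.symm))
      rw [Polynomial.coeff_C_mul, Polynomial.coeff_X_pow, if_neg hne, mul_zero]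
    · intro hi; exact absurd (Finset.mem_univ i) hi
  have hP0 : P ≠ 0 := fun h0 => hci (by rw [← hcoeff, h0, Polynomial.coeff_zero])
  -- degree bound
  have hdeg : P.natDegree ≤ q ^ (t - 1) := by
    apply Polynomial.natDegree_sum_le_of_forall_le
    intro j _
    refine (Polynomial.natDegree_C_mul_X_pow_le _ _).trans ?_
    exact Nat.pow_le_pow_right (by omega) (by omega)
  -- the span has q ^ n elements, all roots of P
  haveI : Fintype S := Fintype.ofFinite _
  have hfr : finrank Fq S = n := hx
  have hcardS : Fintype.card S = q ^ n := by
    rw [card_eq_pow_finrank (K := Fq) (V := S), hfr, hq]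
  set Z : Finset Fqm := (S : Set Fqm).toFinset with hZ
  have hZcard : Z.card = q ^ n := by
    rw [hZ, Set.toFinset_card]
    exact hcardS
  have hsub : Z.val ⊆ P.roots := by
    intro a ha
    rw [Polynomial.mem_roots hP0]
    have haS : a ∈ S := by
      have : a ∈ Z := ha
      rwa [hZ, Set.mem_toFinset] at this
    exact hroot a haS
  have hle : Z.card ≤ P.natDegree := Polynomial.card_le_degree_of_subset_roots hsub
  have hlt : q ^ (t - 1) < q ^ n :=
    Nat.pow_lt_pow_right hq2 (by have := i.pos; omega)
  have hcontra : q ^ n ≤ q ^ (t - 1) := by rw [← hZcard]; exact hle.trans hdeg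
  exact absurd (lt_of_le_of_lt hcontra hlt) (lt_irrefl _)

lemma finrank_gab (q : ℕ) (hq : q = Fintype.card Fq) {n t : ℕ} (htn : t ≤ n)
    (x : Fin n → Fqm) (hx : rankWeight Fq x = n) :
    finrank Fqm (gab q t x) = t := by
  rw [gab, finrank_span_eq_card (moore_linearIndependent q hq htn x hx), Fintype.card_fin]

lemma rankWeight_pow (q : ℕ) (hq : q = Fintype.card Fq) {n : ℕ} (E : ℕ) (x : Fin n → Fqm) :
    rankWeight Fq (fun j => x j ^ q ^ E) = rankWeight Fq x := by
  have hq2 : 2 ≤ q := by rw [hq]; exact Fintype.one_lt_card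
  have hq0 : q ^ E ≠ 0 := pow_ne_zero _ (by omega)
  let φ : Fqm →ₗ[Fq] Fqm :=
    { toFun := fun y => y ^ q ^ E
      map_add' := fun a b => add_pow_q q hq a b E
      map_smul' := by
        intro a y
        simp only [RingHom.id_apply, Algebra.smul_def, mul_pow,
          algebraMap_pow_q_pow q hq] }
  have hinj : Function.Injective φ := by
    rw [← LinearMap.ker_eq_bot, eq_bot_iff]
    intro y hy
    have h1 : y ^ q ^ E = 0 := hy
    have h2 : y = 0 := pow_eq_zero_iff hq0 |>.mp h1
    simpa [h2]
  have hrange : (Set.range fun j => x j ^ q ^ E) = φ '' Set.range x := by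
    ext a
    simp only [Set.mem_range, Set.mem_image]
    constructor
    · rintro ⟨j, rfl⟩; exact ⟨x j, ⟨j, rfl⟩, rfl⟩
    · rintro ⟨y, ⟨j, rfl⟩, rfl⟩; exact ⟨j, rfl⟩
  unfold rankWeight
  rw [hrange, ← Submodule.map_span]
  exact (LinearEquiv.finrank_eq
    (Submodule.equivMapOfInjective φ hinj (Submodule.span Fq (Set.range x)))).symm

end Moore

/-- for `g ∈ F_{q^m}^n` with `‖g‖_q = n ≤ m`, the dual of `Gab_k(g)` is
`Gab_{n−k}(h^{q^{−(n−k−1)}})` where `h` is any full-rank-weight vector in the dual of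
`Gab_{n−1}(g)` (the inverse Frobenius `x ↦ x^{q^{-1}}` on `F_{q^m}` being
`x ↦ x^{q^{m−1}}`); in particular the dual of a Gabidulin code is a Gabidulin code. -/
theorem stmt18 (Fq Fqm : Type) [Field Fq] [Fintype Fq] [Field Fqm] [Fintype Fqm]
    [Algebra Fq Fqm] (q : ℕ) (hq : q = Fintype.card Fq)
    (m : ℕ) (hm : m = Module.finrank Fq Fqm)
    (n k : ℕ) (hk : 1 ≤ k) (hkn : k < n) (hnm : n ≤ m)
    (g : Fin n → Fqm) (hg : rankWeight Fq g = n)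
    (h : Fin n → Fqm) (hmem : h ∈ dualCode (gab q (n - 1) g))
    (hh : rankWeight Fq h = n) :
    dualCode (gab q k g) =
      gab q (n - k) (fun j : Fin n => h j ^ q ^ ((m - 1) * (n - k - 1))) := by
  classical
  have hq2 : 2 ≤ q := by rw [hq]; exact Fintype.one_lt_card
  -- cardinality of Fqm
  have hcardFqm : Fintype.card Fqm = q ^ m := by
    rw [card_eq_pow_finrank (K := Fq) (V := Fqm), ← hq, ← hm]
  -- x ^ (q ^ (m * l)) = x
  have hqm : ∀ (x : Fqm) (l : ℕ), x ^ q ^ (m * l) = x := by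
    intro x l
    induction l with
    | zero => simp
    | succ l ih =>
        rw [Nat.mul_succ, pow_add, pow_mul, ih, ← hcardFqm, FiniteField.pow_card]
  set E := (m - 1) * (n - k - 1) with hE
  -- the dual pairs of generators vanish
  have key : ∀ (a : Fin k) (i : Fin (n - k)),
      ∑ j : Fin n, g j ^ q ^ (a : ℕ) * (h j ^ q ^ E) ^ q ^ (i : ℕ) = 0 := by
    intro a i
    set s := n - k - 1 - (i : ℕ) with hs
    have his : (i : ℕ) + s = n - k - 1 := by
      have := i.isLt; omega
    set T := ∑ j : Fin n, g j ^ q ^ (a : ℕ) * (h j ^ q ^ E) ^ q ^ (i : ℕ) with hT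
    have hTpow : T ^ q ^ s = 0 := by
      have expand : T ^ q ^ s
          = ∑ j : Fin n, (g j ^ q ^ (a : ℕ) * (h j ^ q ^ E) ^ q ^ (i : ℕ)) ^ q ^ s :=
        sum_pow_q q hq _ _ s
      have hterm : ∀ j : Fin n, (g j ^ q ^ (a : ℕ) * (h j ^ q ^ E) ^ q ^ (i : ℕ)) ^ q ^ s
          = g j ^ q ^ ((a : ℕ) + s) * h j ^ q ^ (E + ((i : ℕ) + s)) := by
        intro j
        rw [mul_pow, ← pow_mul, ← pow_mul, ← pow_mul, ← pow_add, ← pow_add, ← pow_add]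
      have hEis : E + ((i : ℕ) + s) = m * (n - k - 1) := by
        have h2 : m = (m - 1) + 1 := by omega
        calc E + ((i : ℕ) + s) = (m - 1) * (n - k - 1) + (n - k - 1) := by
              rw [hE]; omega
          _ = ((m - 1) + 1) * (n - k - 1) := by ring
          _ = m * (n - k - 1) := by rw [← h2]
      have hzero : ∀ j : Fin n, h j ^ q ^ (E + ((i : ℕ) + s)) = h j := by
        intro j; rw [hEis]; exact hqm (h j) (n - k - 1)
      rw [expand]
      simp only [hterm, hzero]
      -- now use hmem
      have has : (a : ℕ) + s < n - 1 := by
        have := a.isLt; have := i.isLt; omega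
      have hgen : (fun j : Fin n => g j ^ q ^ ((a : ℕ) + s)) ∈ gab q (n - 1) g := by
        apply Submodule.subset_span
        exact ⟨⟨(a : ℕ) + s, has⟩, rfl⟩
      exact (mem_dualCode _ h).mp hmem _ hgen
    have hqs : q ^ s ≠ 0 := pow_ne_zero _ (by omega)
    exact pow_eq_zero_iff hqs |>.mp hTpow
  -- inclusion
  have hle : gab q (n - k) (fun j : Fin n => h j ^ q ^ E) ≤ dualCode (gab q k g) := by
    refine Submodule.span_le.mpr ?_
    rintro _ ⟨i, rfl⟩
    rw [SetLike.mem_coe]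
    refine mem_dualCode_span _ _ ?_
    rintro _ ⟨a, rfl⟩
    exact key a i
  -- dimensions
  have hnk1 : n - k ≤ n := Nat.sub_le n k
  have d1 : finrank Fqm (gab q k g) = k := finrank_gab q hq (le_of_lt hkn) g hg
  have d2 : finrank Fqm (dualCode (gab q k g)) = n - k := by
    rw [finrank_dualCode, d1]
  have hh' : rankWeight Fq (fun j : Fin n => h j ^ q ^ E) = n := by
    rw [rankWeight_pow q hq E h, hh]
  have d3 : finrank Fqm (gab q (n - k) (fun j : Fin n => h j ^ q ^ E)) = n - k :=
    finrank_gab q hq hnk1 _ hh'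
  exact (Submodule.eq_of_le_of_finrank_eq hle (d3.trans d2.symm)).symm
end
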